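/- Under the same setting, symmetrically: if x₀ ∈ ℝ satisfies g(x₀) > f2(T,x₀), then G̃(x₀) < G(x₀). -/

import Mathlib

open Set

/-!
Moving down from `x₀` to `x₀ - y` costs `∫ e^{-cT} f2(T,·)` over `[x₀ - y, x₀]` and lowers `G` by
`∫ e^{-cT} g` over the same interval. Since `g > f2(T,·)` near `x₀`, for small `y > 0` the
saving exceeds the cost, so this candidate in the infimum defining `G̃(x₀)` is already below `G(x₀)`.
-/

theorem exists_pos_integral_lt_integral_of_lt {φ ψ : ℝ → ℝ} (hφ : Continuous φ)
    (hψ : Continuous ψ) {x : ℝ} (h : ψ x < φ x) :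
    ∃ y > 0, ∫ u in (x - y)..x, ψ u < ∫ u in (x - y)..x, φ u := by
  obtain ⟨l, hlx, hlt⟩ := exists_Ioc_subset_of_mem_nhds
    (hψ.continuousAt.eventually_lt hφ.continuousAt h) ⟨x - 1, by linarith⟩
  refine ⟨x - l, sub_pos.mpr hlx, ?_⟩
  rw [sub_sub_cancel]
  exact intervalIntegral.integral_lt_integral_of_continuousOn_of_le_of_exists_lt hlx
    hψ.continuousOn hφ.continuousOn (fun u hu => (hlt hu).le) ⟨x, right_mem_Icc.mpr hlx.le, h⟩

theorem stmt2_general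
    (T c : ℝ)
    (f1 f2 : ℝ → ℝ → ℝ) (g : ℝ → ℝ)
    (hf2 : Continuous (Function.uncurry f2))
    (hg : Continuous g)
    (G Gt : ℝ → ℝ)
    (hG : ∀ x, G x = ∫ y in (0:ℝ)..x, Real.exp (-(c*T)) * g y)
    (hGt : ∀ x, IsGLB
      ({v : ℝ | ∃ y₁ ≥ (0:ℝ), v = G (x + y₁) + ∫ u in x..(x + y₁), Real.exp (-(c*T)) * f1 T u} ∪
       {v : ℝ | ∃ y₂ ≥ (0:ℝ), v = G (x - y₂) + ∫ u in (x - y₂)..x, Real.exp (-(c*T)) * f2 T u})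
      (Gt x))
    (x₀ : ℝ) (hx₀ : f2 T x₀ < g x₀) :
    Gt x₀ < G x₀ := by
  have hcg : Continuous fun u => Real.exp (-(c*T)) * g u := continuous_const.mul hg
  have hcf2 : Continuous fun u => Real.exp (-(c*T)) * f2 T u :=
    continuous_const.mul (hf2.comp (continuous_const.prodMk continuous_id))
  obtain ⟨y, hy, hlt⟩ := exists_pos_integral_lt_integral_of_lt hcg hcf2
    (mul_lt_mul_of_pos_left hx₀ (Real.exp_pos _))
  have hGdiff : G x₀ - G (x₀ - y) = ∫ u in (x₀ - y)..x₀, Real.exp (-(c*T)) * g u := by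
    rw [hG, hG, intervalIntegral.integral_interval_sub_left (hcg.intervalIntegrable _ _)
      (hcg.intervalIntegrable _ _)]
  calc Gt x₀ ≤ G (x₀ - y) + ∫ u in (x₀ - y)..x₀, Real.exp (-(c*T)) * f2 T u :=
        (hGt x₀).1 (Or.inr ⟨y, hy.le, rfl⟩)
    _ < G x₀ := by linarith

theorem stmt2
    (T c : ℝ) (hT : 0 < T)
    (f1 f2 : ℝ → ℝ → ℝ) (g : ℝ → ℝ)
    (hf1 : Continuous (Function.uncurry f1)) (hf2 : Continuous (Function.uncurry f2))
    (hg : Continuous g)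
    (hpos : ∀ t ∈ Icc (0:ℝ) T, ∀ y, 0 < f2 t y ∧ 0 < f1 t y)
    (G Gt : ℝ → ℝ)
    (hG : ∀ x, G x = ∫ y in (0:ℝ)..x, Real.exp (-(c*T)) * g y)
    (hGt : ∀ x, IsGLB
      ({v : ℝ | ∃ y₁ ≥ (0:ℝ), v = G (x + y₁) + ∫ u in x..(x + y₁), Real.exp (-(c*T)) * f1 T u} ∪
       {v : ℝ | ∃ y₂ ≥ (0:ℝ), v = G (x - y₂) + ∫ u in (x - y₂)..x, Real.exp (-(c*T)) * f2 T u})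
      (Gt x))
    (x₀ : ℝ) (hx₀ : f2 T x₀ < g x₀) :
    Gt x₀ < G x₀ :=
  stmt2_general T c f1 f2 g hf2 hg G Gt hG hGt x₀ hx₀
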